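/- Let μ be a dominant cocharacter, v ∈ W₀, and set x = v t^μ (so w_x = id). Then Φ_x = {α ∈ Φ⁺ : ⟨α, μ⟩ = 0 and vα ∈ Φ⁺}, and consequently for every r ∈ W_x one has r·μ = μ. -/

import Mathlib

open scoped RealInnerProductSpace
noncomputable section

attribute [local instance] Classical.propDecidable
set_option linter.unusedSectionVars false
set_option linter.unusedVariables false
set_option maxHeartbeats 1000000

variable {V : Type*} [NormedAddCommGroup V] [InnerProductSpace ℝ V] [FiniteDimensional ℝ V]

/-- A (reduced, crystallographic) root system realized in a real inner product space:
finite, roots nonzero, closed under the reflections `s_α`, crystallographic, and reduced. -/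
structure IsRootSystem (Φ : Set V) : Prop where
  finite : Φ.Finite
  ne_zero : ∀ α ∈ Φ, α ≠ 0
  reflect_mem : ∀ α ∈ Φ, ∀ β ∈ Φ, β - (2 * ⟪α, β⟫ / ⟪α, α⟫) • α ∈ Φ
  crystallographic : ∀ α ∈ Φ, ∀ β ∈ Φ, ∃ n : ℤ, 2 * ⟪α, β⟫ / ⟪α, α⟫ = (n : ℝ)
  reduced : ∀ α ∈ Φ, ∀ t : ℝ, t • α ∈ Φ → t = 1 ∨ t = -1

/-- A choice of positive roots `Φp` for the root system `Φ`. -/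
structure IsPositiveSystem (Φ Φp : Set V) : Prop where
  subset : Φp ⊆ Φ
  neg_xor : ∀ α ∈ Φ, (α ∈ Φp ↔ -α ∉ Φp)
  add_mem : ∀ α ∈ Φp, ∀ β ∈ Φp, α + β ∈ Φ → α + β ∈ Φp

/-- `Δ` is the set of simple roots of the positive system `Φp`: every positive root is a
sum of simple roots through a sequence of partial sums all of which are positive roots. -/
structure IsBase (Φ Φp Δ : Set V) : Prop where
  subset : Δ ⊆ Φp
  gen : ∀ α ∈ Φp, ∃ l : List V, l ≠ [] ∧ (∀ β ∈ l, β ∈ Δ) ∧ l.sum = α ∧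
    ∀ n, n < l.length → (l.take (n + 1)).sum ∈ Φp

/-- The orthogonal reflection `s_α` in the hyperplane orthogonal to `α`. -/
def sRefl (α : V) : V ≃ₗᵢ[ℝ] V := Submodule.reflection (Submodule.span ℝ {α})ᗮ

/-- The Weyl group `W₀`: the group generated by the reflections in the roots. -/
def weylGroup (Φ : Set V) : Subgroup (V ≃ₗᵢ[ℝ] V) :=
  Subgroup.closure {w | ∃ α ∈ Φ, w = sRefl α}

/-- The coroot `α^∨ = 2α/⟨α,α⟩`. -/
def coro (α : V) : V := (2 / ⟪α, α⟫) • α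

/-- The length of a Weyl group element, as the number of inversions:
`ℓ(w) = #{α ∈ Φ⁺ : wα ∈ Φ⁻}`. -/
def len (Φp : Set V) (w : V ≃ₗᵢ[ℝ] V) : ℕ := {α ∈ Φp | w α ∉ Φp}.ncard

/-- The set `W_x = {r ∈ W₀ : r(Φ⁺ \ Φ_x) ⊆ Φ⁺}`. -/
def Wx (Φ Φp Φx : Set V) : Set (V ≃ₗᵢ[ℝ] V) :=
  {r | r ∈ weylGroup Φ ∧ ∀ β ∈ Φp \ Φx, r β ∈ Φp}

/-- Irreducibility: the set cannot be split into two nonempty mutually orthogonal parts. -/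
def RootIsIrreducible (Φ : Set V) : Prop :=
  Φ.Nonempty ∧ ∀ s t : Set V, Φ = s ∪ t → (∀ a ∈ s, ∀ b ∈ t, ⟪a, b⟫ = 0) →
    s = ∅ ∨ t = ∅

/-- The `k`-value `k(a, t^μ w) = ⟨a, μ⟩ + δ_{w⁻¹a}` of the alcove `t^μ w` with respect to
the root `a`, where `δ_β = 0` if `β` is positive and `-1` otherwise. -/
def kval (Φp : Set V) (a μ : V) (w : V ≃ₗᵢ[ℝ] V) : ℝ :=
  ⟪a, μ⟫ + (if w.symm a ∈ Φp then 0 else -1)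



theorem sRefl_apply (α x : V) :
    sRefl α x = x - (2 * ⟪α, x⟫ / ⟪α, α⟫) • α := by
  have h := Submodule.reflection_orthogonal_apply (𝕜 := ℝ) (K := Submodule.span ℝ {α}) x
  rw [sRefl, h, Submodule.reflection_apply, Submodule.starProjection_singleton]
  have hn : (‖α‖ : ℝ) ^ 2 = ⟪α, α⟫ := by rw [← real_inner_self_eq_norm_sq]
  rw [hn, two_smul]
  rw [show (2 : ℝ) * ⟪α, x⟫ / ⟪α, α⟫ = ⟪α, x⟫ / ⟪α, α⟫ + ⟪α, x⟫ / ⟪α, α⟫ by ring]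
  rw [add_smul]
  simp only [RCLike.ofReal_real_eq_id, id_eq]
  abel

theorem inner_self_pos' (α : V) (hα : α ≠ 0) : 0 < ⟪α, α⟫ := by
  rcases lt_or_eq_of_le (real_inner_self_nonneg (x := α)) with h | h
  · exact h
  · exact absurd (inner_self_eq_zero.1 h.symm) hα

theorem sRefl_self (α : V) (hα : α ≠ 0) : sRefl α α = -α := by
  have h0 : ⟪α, α⟫ ≠ 0 := inner_self_ne_zero.2 hα
  rw [sRefl_apply]
  rw [mul_div_assoc, div_self h0]
  module

theorem sRefl_orth (α x : V) (h : ⟪α, x⟫ = 0) : sRefl α x = x := by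
  rw [sRefl_apply, h]
  simp

theorem sRefl_invol (α x : V) : sRefl α (sRefl α x) = x := by
  rw [sRefl]
  exact Submodule.reflection_reflection _ x

theorem sRefl_inv (α : V) : (sRefl α)⁻¹ = sRefl α := by
  ext x
  have := sRefl_invol α x
  calc (sRefl α)⁻¹ x = (sRefl α)⁻¹ (sRefl α (sRefl α x)) := by rw [this]
    _ = sRefl α x := by
        simp [← LinearIsometryEquiv.coe_mul, inv_mul_cancel]

theorem sRefl_sq (α : V) : sRefl α * sRefl α = 1 := by
  nth_rewrite 1 [← sRefl_inv α]
  rw [inv_mul_cancel]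

theorem sRefl_conj (w : V ≃ₗᵢ[ℝ] V) (α : V) :
    sRefl (w α) = w * sRefl α * w⁻¹ := by
  ext x
  have hinner : ∀ y z : V, ⟪w y, w z⟫ = ⟪y, z⟫ := fun y z => w.inner_map_map y z
  have hx : x = w (w⁻¹ x) := by
    simp [← LinearIsometryEquiv.coe_mul, mul_inv_cancel]
  show sRefl (w α) x = w (sRefl α (w⁻¹ x))
  rw [sRefl_apply, sRefl_apply, map_sub, map_smul]
  rw [← hx]
  have : ⟪w α, x⟫ = ⟪α, (w⁻¹ : V ≃ₗᵢ[ℝ] V) x⟫ := by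
    conv_lhs => rw [hx]
    exact hinner α _
  rw [this, hinner]

section RS
variable {Φ Φp : Set V} (hΦ : IsRootSystem Φ) (hpos : IsPositiveSystem Φ Φp)
include hΦ hpos

theorem neg_mem_root (α : V) (hα : α ∈ Φ) : -α ∈ Φ := by
  have h := hΦ.reflect_mem α hα α hα
  have haa : ⟪α, α⟫ ≠ 0 := inner_self_ne_zero.2 (hΦ.ne_zero α hα)
  rw [mul_div_assoc, div_self haa] at h
  convert h using 1
  module

theorem sRefl_mem_root (α β : V) (hα : α ∈ Φ) (hβ : β ∈ Φ) : sRefl α β ∈ Φ := by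
  rw [sRefl_apply]; exact hΦ.reflect_mem α hα β hβ

theorem pos_of_not_pos (α : V) (hα : α ∈ Φ) (h : α ∉ Φp) : -α ∈ Φp := by
  by_contra hn
  exact h ((hpos.neg_xor α hα).2 hn)

theorem neg_not_pos (α : V) (hα : α ∈ Φp) : -α ∉ Φp :=
  (hpos.neg_xor α (hpos.subset hα)).1 hα

theorem not_prop_ne (α β : V) (hα : α ∈ Φ) (hβ : β ∈ Φ) (h1 : α ≠ β) (h2 : α ≠ -β) :
    ⟪α, β⟫ * ⟪α, β⟫ < ⟪α, α⟫ * ⟪β, β⟫ := by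
  have hα0 := hΦ.ne_zero α hα
  have haa := inner_self_pos' α hα0
  set c : ℝ := ⟪α, β⟫ / ⟪α, α⟫ with hc
  have hγ : β - c • α ≠ 0 := by
    intro h0
    have hβc : β = c • α := sub_eq_zero.1 h0
    rw [hβc] at hβ
    rcases hΦ.reduced α hα c hβ with h | h
    · rw [h, one_smul] at hβc; exact h1 hβc.symm
    · rw [h, neg_smul, one_smul] at hβc
      apply h2; rw [hβc]; simp
  have hq := inner_self_pos' _ hγ
  have hexp : ⟪β - c • α, β - c • α⟫ = ⟪β, β⟫ - ⟪α, β⟫ * ⟪α, β⟫ / ⟪α, α⟫ := by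
    rw [inner_sub_sub_self]
    simp only [real_inner_smul_left, real_inner_smul_right]
    rw [show ⟪β, α⟫ = ⟪α, β⟫ from real_inner_comm α β, hc]
    field_simp
    ring
  rw [hexp] at hq
  have : ⟪α, β⟫ * ⟪α, β⟫ / ⟪α, α⟫ < ⟪β, β⟫ := by linarith
  calc ⟪α, β⟫ * ⟪α, β⟫ = (⟪α, β⟫ * ⟪α, β⟫ / ⟪α, α⟫) * ⟪α, α⟫ := by field_simp
    _ < ⟪β, β⟫ * ⟪α, α⟫ := by
        apply mul_lt_mul_of_pos_right this haa
    _ = ⟪α, α⟫ * ⟪β, β⟫ := mul_comm _ _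

theorem sum_root (α β : V) (hα : α ∈ Φ) (hβ : β ∈ Φ) (h1 : α ≠ β) (h2 : α ≠ -β)
    (hneg : ⟪α, β⟫ < 0) : α + β ∈ Φ := by
  obtain ⟨m, hm⟩ := hΦ.crystallographic α hα β hβ
  obtain ⟨n, hn⟩ := hΦ.crystallographic β hβ α hα
  rw [show ⟪β, α⟫ = ⟪α, β⟫ from real_inner_comm α β] at hn
  have haa := inner_self_pos' α (hΦ.ne_zero α hα)
  have hbb := inner_self_pos' β (hΦ.ne_zero β hβ)
  have hm0 : (m : ℝ) < 0 := by
    rw [← hm]; exact div_neg_of_neg_of_pos (by linarith) haa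
  have hn0 : (n : ℝ) < 0 := by
    rw [← hn]; exact div_neg_of_neg_of_pos (by linarith) hbb
  have hm1 : m ≤ -1 := by have : m < 0 := by exact_mod_cast hm0
                          omega
  have hn1 : n ≤ -1 := by have : n < 0 := by exact_mod_cast hn0
                          omega
  have hcs := not_prop_ne hΦ hpos α β hα hβ h1 h2
  have hprod : (m : ℝ) * (n : ℝ) < 4 := by
    rw [← hm, ← hn]
    have haa' : ⟪α, α⟫ ≠ 0 := ne_of_gt haa
    have hbb' : ⟪β, β⟫ ≠ 0 := ne_of_gt hbb
    rw [div_mul_div_comm]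
    rw [div_lt_iff₀ (by positivity)]
    nlinarith [hcs]
  have hmn4 : ¬(m ≤ -2 ∧ n ≤ -2) := by
    rintro ⟨h2m, h2n⟩
    have h4 : (4 : ℤ) ≤ m * n := by
      nlinarith [mul_nonneg (by linarith : (0:ℤ) ≤ -m-2) (by linarith : (0:ℤ) ≤ -n-2)]
    have : (4 : ℝ) ≤ (m : ℝ) * (n : ℝ) := by exact_mod_cast h4
    linarith
  have hcase : m = -1 ∨ n = -1 := by
    by_contra hc
    push_neg at hc
    apply hmn4
    constructor
    · omega
    · omega
  rcases hcase with h | h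
  · have := hΦ.reflect_mem α hα β hβ
    rw [hm, h] at this
    convert this using 1
    push_cast
    module
  · have := hΦ.reflect_mem β hβ α hα
    rw [show ⟪β, α⟫ = ⟪α, β⟫ from real_inner_comm α β, hn, h] at this
    convert this using 1
    push_cast
    module
end RS

section RS2
variable {Φ Φp : Set V} (hΦ : IsRootSystem Φ) (hpos : IsPositiveSystem Φ Φp)
include hΦ hpos

theorem ne_neg_of_pos (α β : V) (hα : α ∈ Φp) (hβ : β ∈ Φp) : α ≠ -β := by
  intro h
  exact neg_not_pos hΦ hpos β hβ (h ▸ hα)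

theorem string_lemma (n : ℕ) : ∀ α β : V, α ∈ Φp → β ∈ Φp → α ≠ β →
    2 * ⟪α, β⟫ / ⟪α, α⟫ = -(n : ℝ) → sRefl α β ∈ Φp := by
  induction n using Nat.strong_induction_on with
  | _ n IH =>
  intro α β hα hβ hne hval
  have hαΦ := hpos.subset hα
  have hβΦ := hpos.subset hβ
  have haa := inner_self_pos' α (hΦ.ne_zero α hαΦ)
  match n, hval with
  | 0, hval =>
    have hab : ⟪α, β⟫ = 0 := by
      have : 2 * ⟪α, β⟫ / ⟪α, α⟫ = 0 := by rw [hval]; norm_num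
      field_simp at this
      linarith
    rw [sRefl_orth α β hab]; exact hβ
  | 1, hval =>
    have hab : ⟪α, β⟫ < 0 := by
      have : 2 * ⟪α, β⟫ / ⟪α, α⟫ < 0 := by rw [hval]; norm_num
      by_contra h
      push_neg at h
      have : 0 ≤ 2 * ⟪α, β⟫ / ⟪α, α⟫ := by positivity
      linarith
    have hsum : α + β ∈ Φ :=
      sum_root hΦ hpos α β hαΦ hβΦ hne (ne_neg_of_pos hΦ hpos α β hα hβ) hab
    have hsum' : β + α ∈ Φp := by
      rw [add_comm] at hsum
      exact hpos.add_mem β hβ α hα hsum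
    rw [sRefl_apply, hval]
    push_cast
    convert hsum' using 1
    module
  | (k+2), hval =>
    have hab : ⟪α, β⟫ < 0 := by
      have h2 : 2 * ⟪α, β⟫ / ⟪α, α⟫ < 0 := by
        rw [hval]; push_cast; linarith
      by_contra h
      push_neg at h
      have : 0 ≤ 2 * ⟪α, β⟫ / ⟪α, α⟫ := by positivity
      linarith
    have hsum : α + β ∈ Φ :=
      sum_root hΦ hpos α β hαΦ hβΦ hne (ne_neg_of_pos hΦ hpos α β hα hβ) hab
    have hβ' : β + α ∈ Φp := by
      rw [add_comm] at hsum
      exact hpos.add_mem β hβ α hα hsum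
    have hval' : 2 * ⟪α, β + α⟫ / ⟪α, α⟫ = -((k : ℕ) : ℝ) := by
      rw [inner_add_right]
      rw [show 2 * (⟪α, β⟫ + ⟪α, α⟫) / ⟪α, α⟫
          = 2 * ⟪α, β⟫ / ⟪α, α⟫ + 2 * (⟪α, α⟫ / ⟪α, α⟫) by ring]
      rw [div_self (ne_of_gt haa), hval]
      push_cast
      ring
    have hne' : α ≠ β + α := by
      intro h
      have : β = 0 := by
        have := h.symm
        have : β + α - α = α - α := by rw [this]
        simpa using this
      exact hΦ.ne_zero β hβΦ this
    have hk := IH k (by omega) α (β + α) hα hβ' hne' hval'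
    -- sRefl α (β + α) = sRefl α β + (- α)... and sRefl α β = sRefl α (β+α) + α
    have hre : sRefl α β = sRefl α (β + α) + α := by
      rw [map_add, sRefl_self α (hΦ.ne_zero α hαΦ)]
      module
    have hmem : sRefl α β ∈ Φ := sRefl_mem_root hΦ hpos α β hαΦ hβΦ
    rw [hre] at hmem ⊢
    exact hpos.add_mem _ hk α hα hmem

theorem inv_inner_pos (α β : V) (hα : α ∈ Φp) (hβ : β ∈ Φp) (h : sRefl α β ∉ Φp) :
    0 < ⟪α, β⟫ := by
  have hαΦ := hpos.subset hα
  have hβΦ := hpos.subset hβ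
  have haa := inner_self_pos' α (hΦ.ne_zero α hαΦ)
  rcases eq_or_ne α β with rfl | hne
  · exact haa
  by_contra hle
  push_neg at hle
  obtain ⟨m, hm⟩ := hΦ.crystallographic α hαΦ β hβΦ
  have hm0 : (m : ℝ) ≤ 0 := by
    rw [← hm]
    apply div_nonpos_of_nonpos_of_nonneg (by linarith) (le_of_lt haa)
  have hmz : m ≤ 0 := by exact_mod_cast hm0
  have : 2 * ⟪α, β⟫ / ⟪α, α⟫ = -(((-m).toNat : ℕ) : ℝ) := by
    rw [hm]
    have h5 : (((-m).toNat : ℕ) : ℝ) = ((-m : ℤ) : ℝ) := by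
      exact_mod_cast congrArg (fun z : ℤ => (z : ℝ)) (Int.toNat_of_nonneg (show (0:ℤ) ≤ -m by omega))
    rw [h5]
    push_cast
    ring
  exact h (string_lemma hΦ hpos (-m).toNat α β hα hβ hne this)

theorem fpos (α : V) (hα : α ∈ Φp) :
    0 < ⟪α, ((hΦ.finite.subset hpos.subset).toFinset.sum id : V)⟫ := by
  have hPfin := hΦ.finite.subset hpos.subset
  set Pf := hPfin.toFinset with hPf
  have hmem : ∀ β : V, β ∈ Pf ↔ β ∈ Φp := fun β => hPfin.mem_toFinset
  rw [show (Pf.sum id : V) = ∑ β ∈ Pf, β from rfl]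
  rw [inner_sum]
  rw [← Finset.sum_filter_add_sum_filter_not Pf (fun β => sRefl α β ∈ Φp)]
  have hA : (∑ β ∈ Pf.filter (fun β => sRefl α β ∈ Φp), ⟪α, β⟫) = 0 := by
    apply Finset.sum_involution (fun β _ => sRefl α β)
    · intro β hβ
      have : ⟪α, sRefl α β⟫ = -⟪α, β⟫ := by
        have h1 : ⟪sRefl α α, sRefl α (sRefl α β)⟫ = ⟪α, sRefl α β⟫ :=
          (sRefl α).inner_map_map α (sRefl α β)
        rw [sRefl_invol, sRefl_self α (hΦ.ne_zero α (hpos.subset hα))] at h1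
        rw [← h1, inner_neg_left]
      rw [this]; ring
    · intro β hβm hf heq
      apply hf
      have haa := inner_self_pos' α (hΦ.ne_zero α (hpos.subset hα))
      have h2 : β - (2 * ⟪α, β⟫ / ⟪α, α⟫) • α = β := by rw [← sRefl_apply, heq]
      have h3 : (2 * ⟪α, β⟫ / ⟪α, α⟫) • α = 0 := sub_eq_self.mp h2
      have h4 : 2 * ⟪α, β⟫ / ⟪α, α⟫ = 0 := by
        rcases smul_eq_zero.1 h3 with h | h
        · exact h
        · exact absurd h (hΦ.ne_zero α (hpos.subset hα))
      rcases div_eq_zero_iff.1 h4 with h5 | h5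
      · linarith
      · exact absurd h5 (ne_of_gt haa)
    · intro β hβ
      simp only [Finset.mem_filter, hmem] at hβ ⊢
      exact ⟨hβ.2, by rw [sRefl_invol]; exact hβ.1⟩
    · intro β hβ
      exact sRefl_invol α β
  rw [hA, zero_add]
  apply Finset.sum_pos
  · intro β hβ
    simp only [Finset.mem_filter, hmem] at hβ
    exact inv_inner_pos hΦ hpos α β hα hβ.1 hβ.2
  · refine ⟨α, ?_⟩
    simp only [Finset.mem_filter, hmem]
    refine ⟨hα, ?_⟩
    rw [sRefl_self α (hΦ.ne_zero α (hpos.subset hα))]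
    exact neg_not_pos hΦ hpos α hα
end RS2

def simples (Φp : Set V) : Set V := {β ∈ Φp | ¬∃ γ₁ ∈ Φp, ∃ γ₂ ∈ Φp, β = γ₁ + γ₂}

def WD (Φp : Set V) : Subgroup (V ≃ₗᵢ[ℝ] V) :=
  Subgroup.closure {w | ∃ ν ∈ simples Φp, w = sRefl ν}

theorem apply_inv_apply (w : V ≃ₗᵢ[ℝ] V) (x : V) : w (w⁻¹ x) = x := by
  simp

theorem inv_apply_apply (w : V ≃ₗᵢ[ℝ] V) (x : V) : w⁻¹ (w x) = x := by
  simp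

theorem sRefl_neg (α : V) : sRefl (-α) = sRefl α := by
  ext x
  rw [sRefl_apply, sRefl_apply, inner_neg_left, inner_neg_neg]
  rw [smul_neg]
  rw [show 2 * -⟪α, x⟫ / ⟪α, α⟫ = -(2 * ⟪α, x⟫ / ⟪α, α⟫) by ring]
  rw [neg_smul, neg_neg]

section RS3
variable {Φ Φp : Set V} (hΦ : IsRootSystem Φ) (hpos : IsPositiveSystem Φ Φp)

def Pf : Finset V := (hΦ.finite.subset hpos.subset).toFinset

def rho : V := (Pf hΦ hpos).sum id

def simpF : Finset V := (Pf hΦ hpos).filter (· ∈ simples Φp)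

def msr (β : V) : ℕ :=
  ((Pf hΦ hpos).filter (fun δ => ⟪δ, rho hΦ hpos⟫ < ⟪β, rho hΦ hpos⟫)).card

theorem mem_Pf (β : V) : β ∈ Pf hΦ hpos ↔ β ∈ Φp := Set.Finite.mem_toFinset _

theorem mem_simpF (ν : V) : ν ∈ simpF hΦ hpos ↔ ν ∈ simples Φp := by
  rw [simpF, Finset.mem_filter, mem_Pf]
  constructor
  · exact fun h => h.2
  · exact fun h => ⟨h.1, h⟩

theorem simples_subset (ν : V) (h : ν ∈ simples Φp) : ν ∈ Φp := h.1

include hΦ hpos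

theorem weyl_maps_root : ∀ w ∈ weylGroup Φ, (∀ α ∈ Φ, w α ∈ Φ) ∧ (∀ α ∈ Φ, w⁻¹ α ∈ Φ) := by
  intro w hw
  refine Subgroup.closure_induction
    (p := fun w _ => (∀ α ∈ Φ, w α ∈ Φ) ∧ (∀ α ∈ Φ, w⁻¹ α ∈ Φ)) ?_ ?_ ?_ ?_ hw
  · rintro x ⟨α, hα, rfl⟩
    refine ⟨fun β hβ => sRefl_mem_root hΦ hpos α β hα hβ, fun β hβ => ?_⟩
    rw [sRefl_inv]
    exact sRefl_mem_root hΦ hpos α β hα hβ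
  · constructor <;> intro α hα <;> simpa using hα
  · rintro x y hx hy ⟨hx1, hx2⟩ ⟨hy1, hy2⟩
    constructor
    · intro α hα
      have : (x * y) α = x (y α) := rfl
      rw [this]
      exact hx1 _ (hy1 α hα)
    · intro α hα
      rw [mul_inv_rev]
      have : (y⁻¹ * x⁻¹) α = y⁻¹ (x⁻¹ α) := rfl
      rw [this]
      exact hy2 _ (hx2 α hα)
  · rintro x hx ⟨h1, h2⟩
    exact ⟨h2, by simpa using h1⟩

theorem fpos' (α : V) (hα : α ∈ Φp) : 0 < ⟪α, rho hΦ hpos⟫ := fpos hΦ hpos α hα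

theorem msr_lt (β γ : V) (hβ : β ∈ Φp) (h : ⟪β, rho hΦ hpos⟫ < ⟪γ, rho hΦ hpos⟫) :
    msr hΦ hpos β < msr hΦ hpos γ := by
  apply Finset.card_lt_card
  rw [Finset.ssubset_iff_of_subset]
  · refine ⟨β, ?_, ?_⟩
    · rw [Finset.mem_filter, mem_Pf]; exact ⟨hβ, h⟩
    · rw [Finset.mem_filter]
      rintro ⟨-, h2⟩
      exact lt_irrefl _ h2
  · intro δ hδ
    rw [Finset.mem_filter] at hδ ⊢
    exact ⟨hδ.1, lt_trans hδ.2 h⟩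

theorem spanning_aux : ∀ n : ℕ, ∀ β : V, β ∈ Φp → msr hΦ hpos β = n →
    ∃ c : V → ℝ, (∀ ν ∈ simpF hΦ hpos, 0 ≤ c ν) ∧ β = ∑ ν ∈ simpF hΦ hpos, c ν • ν := by
  intro n
  induction n using Nat.strong_induction_on with
  | _ n IH =>
  intro β hβ hmn
  by_cases hs : β ∈ simples Φp
  · refine ⟨fun ν => if ν = β then 1 else 0, ?_, ?_⟩
    · intro ν _
      by_cases h : ν = β <;> simp [h]
    · have h1 : ∀ ν ∈ simpF hΦ hpos, (if ν = β then (1:ℝ) else 0) • ν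
          = if ν = β then β else 0 := by
        intro ν _
        by_cases h : ν = β
        · rw [if_pos h, if_pos h, h, one_smul]
        · rw [if_neg h, if_neg h, zero_smul]
      show β = ∑ ν ∈ simpF hΦ hpos, (if ν = β then (1:ℝ) else 0) • ν
      rw [Finset.sum_congr rfl h1, Finset.sum_ite_eq' (simpF hΦ hpos) β (fun _ => β)]
      rw [if_pos ((mem_simpF hΦ hpos β).2 hs)]
  · have hdec : ∃ γ₁ ∈ Φp, ∃ γ₂ ∈ Φp, β = γ₁ + γ₂ := by
      by_contra h
      exact hs ⟨hβ, h⟩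
    obtain ⟨γ₁, hγ₁, γ₂, hγ₂, hβeq⟩ := hdec
    have hf1 : ⟪γ₁, rho hΦ hpos⟫ < ⟪β, rho hΦ hpos⟫ := by
      have := fpos' hΦ hpos γ₂ hγ₂
      rw [hβeq, inner_add_left]
      linarith
    have hf2 : ⟪γ₂, rho hΦ hpos⟫ < ⟪β, rho hΦ hpos⟫ := by
      have := fpos' hΦ hpos γ₁ hγ₁
      rw [hβeq, inner_add_left]
      linarith
    obtain ⟨c₁, hc₁, he₁⟩ := IH (msr hΦ hpos γ₁) (hmn ▸ msr_lt hΦ hpos γ₁ β hγ₁ hf1) γ₁ hγ₁ rfl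
    obtain ⟨c₂, hc₂, he₂⟩ := IH (msr hΦ hpos γ₂) (hmn ▸ msr_lt hΦ hpos γ₂ β hγ₂ hf2) γ₂ hγ₂ rfl
    refine ⟨fun ν => c₁ ν + c₂ ν, ?_, ?_⟩
    · intro ν hν
      have := hc₁ ν hν
      have := hc₂ ν hν
      show 0 ≤ c₁ ν + c₂ ν
      linarith
    · show β = ∑ ν ∈ simpF hΦ hpos, (c₁ ν + c₂ ν) • ν
      rw [hβeq, he₁, he₂, ← Finset.sum_add_distrib]
      apply Finset.sum_congr rfl
      intro ν _
      rw [add_smul]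

theorem spanning (β : V) (hβ : β ∈ Φp) :
    ∃ c : V → ℝ, (∀ ν ∈ simpF hΦ hpos, 0 ≤ c ν) ∧ β = ∑ ν ∈ simpF hΦ hpos, c ν • ν :=
  spanning_aux hΦ hpos (msr hΦ hpos β) β hβ rfl

theorem simples_pairwise (ν ν' : V) (hν : ν ∈ simples Φp) (hν' : ν' ∈ simples Φp)
    (hne : ν ≠ ν') : ⟪ν, ν'⟫ ≤ 0 := by
  by_contra h
  push_neg at h
  have hνp := simples_subset ν hν
  have hν'p := simples_subset ν' hν'
  have hνΦ := hpos.subset hνp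
  have hν'Φ := hpos.subset hν'p
  have hsum : ν + -ν' ∈ Φ := by
    apply sum_root hΦ hpos ν (-ν') hνΦ (neg_mem_root hΦ hpos ν' hν'Φ)
    · exact fun heq => ne_neg_of_pos hΦ hpos ν ν' hνp hν'p heq
    · intro heq
      rw [neg_neg] at heq
      exact hne heq
    · rw [inner_neg_right]
      linarith
  rw [← sub_eq_add_neg] at hsum
  rcases Classical.em (ν - ν' ∈ Φp) with hc | hc
  · apply hν.2
    exact ⟨ν - ν', hc, ν', hν'p, by abel⟩
  · have : -(ν - ν') ∈ Φp := pos_of_not_pos hΦ hpos _ hsum hc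
    rw [neg_sub] at this
    apply hν'.2
    exact ⟨ν' - ν, this, ν, hνp, by abel⟩

theorem lin_indep (d : V → ℝ) (hsum : ∑ ν ∈ simpF hΦ hpos, d ν • ν = 0) :
    ∀ ν ∈ simpF hΦ hpos, d ν = 0 := by
  set S := simpF hΦ hpos with hS
  set dp : V → ℝ := fun ν => max (d ν) 0 with hdp
  set dm : V → ℝ := fun ν => max (-d ν) 0 with hdm
  have hdpnn : ∀ ν, 0 ≤ dp ν := fun ν => le_max_right _ _
  have hdmnn : ∀ ν, 0 ≤ dm ν := fun ν => le_max_right _ _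
  have hprod0 : ∀ ν, dp ν * dm ν = 0 := by
    intro ν
    rcases le_total (d ν) 0 with h | h
    · rw [show dp ν = 0 from max_eq_right h, zero_mul]
    · rw [show dm ν = 0 from max_eq_right (by linarith : -d ν ≤ 0), mul_zero]
  have hsplit : ∀ ν, d ν = dp ν - dm ν := by
    intro ν
    rcases le_total (d ν) 0 with h | h
    · rw [show dp ν = 0 from max_eq_right h,
        show dm ν = -d ν from max_eq_left (by linarith : 0 ≤ -d ν)]
      ring
    · rw [show dp ν = d ν from max_eq_left h,
        show dm ν = 0 from max_eq_right (by linarith : -d ν ≤ 0)]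
      ring
  have hx : ∑ ν ∈ S, dp ν • ν = ∑ ν ∈ S, dm ν • ν := by
    apply sub_eq_zero.1
    rw [← Finset.sum_sub_distrib]
    rw [← hsum]
    apply Finset.sum_congr rfl
    intro ν _
    rw [← sub_smul, ← hsplit]
  set x : V := ∑ ν ∈ S, dp ν • ν with hxdef
  have hpair : ∀ ν ∈ S, ∀ ν' ∈ S, ν ≠ ν' → ⟪ν, ν'⟫ ≤ 0 := by
    intro ν hν ν' hν' hne
    exact simples_pairwise hΦ hpos ν ν' ((mem_simpF hΦ hpos ν).1 hν)
      ((mem_simpF hΦ hpos ν').1 hν') hne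
  have hxx : ⟪x, x⟫ ≤ 0 := by
    nth_rewrite 2 [hx]
    rw [sum_inner]
    apply Finset.sum_nonpos
    intro ν hν
    rw [real_inner_smul_left, inner_sum]
    rcases eq_or_lt_of_le (hdpnn ν) with h0 | hlt
    · rw [← h0, zero_mul]
    apply mul_nonpos_of_nonneg_of_nonpos (hdpnn ν)
    apply Finset.sum_nonpos
    intro ν' hν'
    rw [real_inner_smul_right]
    rcases eq_or_ne ν ν' with rfl | hne
    · have hdm0 : dm ν = 0 := by
        have := hprod0 ν
        rcases mul_eq_zero.1 this with h | h
        · exact absurd h (ne_of_gt hlt)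
        · exact h
      rw [hdm0, zero_mul]
    · exact mul_nonpos_of_nonneg_of_nonpos (hdmnn ν') (hpair ν hν ν' hν' hne)
  have hx0 : x = 0 := inner_self_eq_zero.1 (le_antisymm hxx real_inner_self_nonneg)
  have hzero : ∀ (e : V → ℝ), (∀ ν, 0 ≤ e ν) → ∑ ν ∈ S, e ν • ν = 0 →
      ∀ ν ∈ S, e ν = 0 := by
    intro e he hesum ν hν
    have hsum2 : ∑ ν ∈ S, e ν * ⟪ν, rho hΦ hpos⟫ = 0 := by
      have : ⟪∑ ν ∈ S, e ν • ν, rho hΦ hpos⟫ = 0 := by rw [hesum, inner_zero_left]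
      rw [sum_inner] at this
      rw [← this]
      apply Finset.sum_congr rfl
      intro ν' _
      rw [real_inner_smul_left]
    have hterm : e ν * ⟪ν, rho hΦ hpos⟫ = 0 := by
      have := (Finset.sum_eq_zero_iff_of_nonneg ?_).1 hsum2 ν hν
      · exact this
      · intro ν' hν'
        apply mul_nonneg (he ν')
        exact le_of_lt (fpos' hΦ hpos ν' ((mem_simpF hΦ hpos ν').1 hν').1)
    rcases mul_eq_zero.1 hterm with h | h
    · exact h
    · exact absurd h (ne_of_gt (fpos' hΦ hpos ν ((mem_simpF hΦ hpos ν).1 hν).1))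
  have hdp0 := hzero dp hdpnn hx0
  have hdm0 := hzero dm hdmnn (by rw [← hx]; exact hx0)
  intro ν hν
  rw [hsplit ν, hdp0 ν hν, hdm0 ν hν, sub_zero]

theorem simple_perm (α δ : V) (hα : α ∈ simples Φp) (hδ : δ ∈ Φp) (hne : δ ≠ α) :
    sRefl α δ ∈ Φp := by
  by_contra h
  have hαp := simples_subset α hα
  have hαΦ := hpos.subset hαp
  have hδΦ := hpos.subset hδ
  have hαF : α ∈ simpF hΦ hpos := (mem_simpF hΦ hpos α).2 hα
  have hmem : sRefl α δ ∈ Φ := sRefl_mem_root hΦ hpos α δ hαΦ hδΦ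
  have hneg : -(sRefl α δ) ∈ Φp := pos_of_not_pos hΦ hpos _ hmem h
  obtain ⟨c, hc, hce⟩ := spanning hΦ hpos δ hδ
  obtain ⟨e, he, hee⟩ := spanning hΦ hpos (-(sRefl α δ)) hneg
  set t : ℝ := 2 * ⟪α, δ⟫ / ⟪α, α⟫ with ht
  have hkey : δ + -(sRefl α δ) = t • α := by
    rw [sRefl_apply]
    module
  set d : V → ℝ := fun ν => c ν + e ν - (if ν = α then t else 0) with hd
  have hdsum : ∑ ν ∈ simpF hΦ hpos, d ν • ν = 0 := by
    have h1 : ∑ ν ∈ simpF hΦ hpos, d ν • ν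
        = (∑ ν ∈ simpF hΦ hpos, (c ν + e ν) • ν)
          - ∑ ν ∈ simpF hΦ hpos, (if ν = α then t else 0) • ν := by
      rw [← Finset.sum_sub_distrib]
      apply Finset.sum_congr rfl
      intro ν _
      show (c ν + e ν - (if ν = α then t else 0)) • ν = _
      rw [sub_smul]
    have h2 : ∑ ν ∈ simpF hΦ hpos, (c ν + e ν) • ν = δ + -(sRefl α δ) := by
      rw [hee, hce, ← Finset.sum_add_distrib]
      apply Finset.sum_congr rfl
      intro ν _
      rw [add_smul]
    have h3 : ∑ ν ∈ simpF hΦ hpos, (if ν = α then t else 0) • ν = t • α := by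
      have : ∀ ν ∈ simpF hΦ hpos, (if ν = α then t else 0) • ν
          = if ν = α then t • α else 0 := by
        intro ν _
        by_cases hνα : ν = α
        · rw [if_pos hνα, if_pos hνα, hνα]
        · rw [if_neg hνα, if_neg hνα, zero_smul]
      rw [Finset.sum_congr rfl this, Finset.sum_ite_eq' (simpF hΦ hpos) α (fun _ => t • α),
        if_pos hαF]
    rw [h1, h2, h3, hkey, sub_self]
  have hall := lin_indep hΦ hpos d hdsum
  have hcz : ∀ ν ∈ simpF hΦ hpos, ν ≠ α → c ν = 0 := by
    intro ν hν hνα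
    have := hall ν hν
    rw [hd] at this
    simp only [if_neg hνα] at this
    have hc' := hc ν hν
    have he' := he ν hν
    show c ν = 0
    have : c ν + e ν - 0 = 0 := this
    linarith
  have hδα : δ = c α • α := by
    rw [hce]
    apply Finset.sum_eq_single α
    · intro ν hν hνα
      rw [hcz ν hν hνα, zero_smul]
    · intro hαF'
      exact absurd hαF hαF'
  have := hΦ.reduced α hαΦ (c α) (hδα ▸ hδΦ)
  rcases this with h1 | h1
  · rw [h1, one_smul] at hδα
    exact hne hδα
  · have := hc α hαF
    rw [h1] at this
    linarith

theorem refl_mem_WD_aux : ∀ n : ℕ, ∀ γ : V, γ ∈ Φp → msr hΦ hpos γ = n →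
    sRefl γ ∈ WD Φp := by
  intro n
  induction n using Nat.strong_induction_on with
  | _ n IH =>
  intro γ hγ hmn
  by_cases hs : γ ∈ simples Φp
  · exact Subgroup.subset_closure ⟨γ, hs, rfl⟩
  obtain ⟨c, hc, hce⟩ := spanning hΦ hpos γ hγ
  have hγΦ := hpos.subset hγ
  have hγγ := inner_self_pos' γ (hΦ.ne_zero γ hγΦ)
  have hex : ∃ ν ∈ simpF hΦ hpos, 0 < c ν * ⟪γ, ν⟫ := by
    by_contra hno
    push_neg at hno
    have : ⟪γ, γ⟫ ≤ 0 := by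
      nth_rewrite 2 [hce]
      rw [inner_sum]
      apply Finset.sum_nonpos
      intro ν hν
      rw [real_inner_smul_right]
      exact hno ν hν
    linarith
  obtain ⟨ν, hνF, hν⟩ := hex
  have hνs : ν ∈ simples Φp := (mem_simpF hΦ hpos ν).1 hνF
  have hνp := simples_subset ν hνs
  have hνΦ := hpos.subset hνp
  have hνν := inner_self_pos' ν (hΦ.ne_zero ν hνΦ)
  have hcν : 0 < c ν := by
    rcases lt_trichotomy (c ν) 0 with h | h | h
    · exact absurd (hc ν hνF) (not_le.2 h)
    · rw [h, zero_mul] at hν; exact absurd hν (lt_irrefl 0)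
    · exact h
  have hγν : 0 < ⟪γ, ν⟫ := by
    by_contra hle
    push_neg at hle
    nlinarith
  have hγνne : γ ≠ ν := fun h => hs (h ▸ hνs)
  set γ' : V := sRefl ν γ with hγ'
  have hγ'p : γ' ∈ Φp := simple_perm hΦ hpos ν γ hνs hγ hγνne
  have hfless : ⟪γ', rho hΦ hpos⟫ < ⟪γ, rho hΦ hpos⟫ := by
    rw [hγ', sRefl_apply, inner_sub_left, real_inner_smul_left]
    have hposf := fpos' hΦ hpos ν hνp
    have htpos : 0 < 2 * ⟪ν, γ⟫ / ⟪ν, ν⟫ := by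
      apply div_pos ?_ hνν
      rw [show ⟪ν, γ⟫ = ⟪γ, ν⟫ from real_inner_comm γ ν]
      linarith
    nlinarith
  have hIH := IH (msr hΦ hpos γ') (hmn ▸ msr_lt hΦ hpos γ' γ hγ'p hfless) γ' hγ'p rfl
  have hconj : sRefl γ = sRefl ν * sRefl γ' * (sRefl ν)⁻¹ := by
    have hback : γ = sRefl ν γ' := by rw [hγ', sRefl_invol]
    rw [hback, ← sRefl_conj (sRefl ν) γ']
  rw [hconj]
  have hνWD : sRefl ν ∈ WD Φp := Subgroup.subset_closure ⟨ν, hνs, rfl⟩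
  exact mul_mem (mul_mem hνWD hIH) (inv_mem hνWD)

theorem refl_mem_WD (γ : V) (hγ : γ ∈ Φp) : sRefl γ ∈ WD Φp :=
  refl_mem_WD_aux hΦ hpos (msr hΦ hpos γ) γ hγ rfl

theorem W0_le_WD : weylGroup Φ ≤ WD Φp := by
  rw [weylGroup]
  apply Subgroup.closure_le (WD Φp) |>.2
  rintro w ⟨α, hα, rfl⟩
  rcases Classical.em (α ∈ Φp) with h | h
  · exact refl_mem_WD hΦ hpos α h
  · have : -α ∈ Φp := pos_of_not_pos hΦ hpos α hα h
    have := refl_mem_WD hΦ hpos (-α) this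
    rwa [sRefl_neg] at this

theorem word_prod_reverse (l : List V) :
    ((l.reverse.map sRefl).prod : V ≃ₗᵢ[ℝ] V) = ((l.map sRefl).prod)⁻¹ := by
  induction l with
  | nil => simp
  | cons ν l IH =>
    simp only [List.reverse_cons, List.map_append, List.prod_append, List.map_cons,
      List.prod_cons, List.map_nil, List.prod_nil, mul_one, mul_inv_rev, IH, sRefl_inv]

theorem exists_word : ∀ w ∈ WD Φp, ∃ l : List V,
    (∀ ν ∈ l, ν ∈ simples Φp) ∧ w = ((l.map sRefl).prod : V ≃ₗᵢ[ℝ] V) := by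
  intro w hw
  refine Subgroup.closure_induction
    (p := fun w _ => ∃ l : List V, (∀ ν ∈ l, ν ∈ simples Φp)
      ∧ w = ((l.map sRefl).prod : V ≃ₗᵢ[ℝ] V)) ?_ ?_ ?_ ?_ hw
  · rintro x ⟨ν, hν, rfl⟩
    exact ⟨[ν], by simpa using hν, by simp⟩
  · exact ⟨[], by simp, by simp⟩
  · rintro x y _ _ ⟨l₁, hl₁, rfl⟩ ⟨l₂, hl₂, rfl⟩
    refine ⟨l₁ ++ l₂, ?_, ?_⟩
    · intro ν hν
      rcases List.mem_append.1 hν with h | h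
      · exact hl₁ ν h
      · exact hl₂ ν h
    · rw [List.map_append, List.prod_append]
  · rintro x _ ⟨l, hl, rfl⟩
    refine ⟨l.reverse, ?_, (word_prod_reverse hΦ hpos l).symm⟩
    intro ν hν
    exact hl ν (List.mem_reverse.1 hν)

theorem drop_lemma : ∀ l : List V, (∀ ν ∈ l, ν ∈ simples Φp) →
    ∀ x : V, x ∈ Φp → (((l.map sRefl).prod : V ≃ₗᵢ[ℝ] V))⁻¹ x ∉ Φp →
    ∃ l' : List V, (∀ ν ∈ l', ν ∈ simples Φp) ∧ l'.length + 1 = l.length ∧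
      sRefl x * ((l.map sRefl).prod : V ≃ₗᵢ[ℝ] V) = ((l'.map sRefl).prod : V ≃ₗᵢ[ℝ] V) := by
  intro l
  induction l with
  | nil =>
    intro _ x hx hnx
    exfalso
    apply hnx
    simpa using hx
  | cons β m IH =>
    intro hlm x hx hnx
    have hβs : β ∈ simples Φp := hlm β List.mem_cons_self
    rcases eq_or_ne x β with heq | hne
    · refine ⟨m, fun ν hν => hlm ν (List.mem_cons_of_mem β hν), by simp, ?_⟩
      rw [heq, List.map_cons, List.prod_cons, ← mul_assoc, sRefl_sq, one_mul]
    · set x' : V := sRefl β x with hx'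
      have hx'p : x' ∈ Φp := simple_perm hΦ hpos β x hβs hx hne
      have hnx' : (((m.map sRefl).prod : V ≃ₗᵢ[ℝ] V))⁻¹ x' ∉ Φp := by
        intro hmem
        apply hnx
        rw [List.map_cons, List.prod_cons, mul_inv_rev, sRefl_inv]
        have : ((((m.map sRefl).prod)⁻¹ * sRefl β : V ≃ₗᵢ[ℝ] V)) x
            = (((m.map sRefl).prod)⁻¹ : V ≃ₗᵢ[ℝ] V) (sRefl β x) := rfl
        rw [this]
        exact hmem
      obtain ⟨l₂, hl₂s, hl₂len, hl₂eq⟩ :=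
        IH (fun ν hν => hlm ν (List.mem_cons_of_mem β hν)) x' hx'p hnx'
      refine ⟨β :: l₂, ?_, ?_, ?_⟩
      · intro ν hν
        rcases List.mem_cons.1 hν with rfl | hν
        · exact hβs
        · exact hl₂s ν hν
      · simp only [List.length_cons]
        omega
      · rw [List.map_cons, List.prod_cons, List.map_cons, List.prod_cons, ← hl₂eq]
        have hcc : sRefl x' = sRefl β * sRefl x * (sRefl β)⁻¹ := by
          rw [hx', ← sRefl_conj (sRefl β) x]
        rw [hcc, sRefl_inv]
        have hgr : sRefl β * (sRefl β * sRefl x * sRefl β * ((m.map sRefl).prod : V ≃ₗᵢ[ℝ] V))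
            = (sRefl β * sRefl β) * (sRefl x * (sRefl β * ((m.map sRefl).prod : V ≃ₗᵢ[ℝ] V))) := by
          group
        rw [hgr, sRefl_sq, one_mul]

theorem main_fix (μ : V) (hdom : ∀ β ∈ Φp, 0 ≤ ⟪β, μ⟫) :
    ∀ k : ℕ, ∀ l : List V, l.length = k → (∀ ν ∈ l, ν ∈ simples Φp) →
    (∀ β ∈ Φp, ((l.map sRefl).prod : V ≃ₗᵢ[ℝ] V) β ∉ Φp → ⟪β, μ⟫ = 0) →
    ((l.map sRefl).prod : V ≃ₗᵢ[ℝ] V) μ = μ := by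
  intro k
  induction k using Nat.strong_induction_on with
  | _ k IH =>
  intro l hlen hls hinv
  cases l with
  | nil => simp
  | cons ν m =>
  have hνs : ν ∈ simples Φp := hls ν List.mem_cons_self
  have hνp := simples_subset ν hνs
  have hmlen : m.length + 1 = k := by simpa using hlen
  have hmls : ∀ ν' ∈ m, ν' ∈ simples Φp := fun ν' hν' => hls ν' (List.mem_cons_of_mem ν hν')
  set u : V ≃ₗᵢ[ℝ] V := ((m.map sRefl).prod : V ≃ₗᵢ[ℝ] V) with hu
  have hw : (((ν::m).map sRefl).prod : V ≃ₗᵢ[ℝ] V) = sRefl ν * u := by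
    rw [List.map_cons, List.prod_cons]
  have humem : u ∈ weylGroup Φ := by
    rw [hu]
    apply Subgroup.list_prod_mem
    intro g hg
    rw [List.mem_map] at hg
    obtain ⟨ν', hν', rfl⟩ := hg
    exact Subgroup.subset_closure ⟨ν', hpos.subset (simples_subset ν' (hmls ν' hν')), rfl⟩
  set γ : V := u⁻¹ ν with hγ
  have hγΦ : γ ∈ Φ := (weyl_maps_root hΦ hpos u humem).2 ν (hpos.subset hνp)
  have huγ : u γ = ν := apply_inv_apply u ν
  by_cases hγp : γ ∈ Φp
  · have hγμ : ⟪γ, μ⟫ = 0 := by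
      apply hinv γ hγp
      rw [hw]
      have h1 : (sRefl ν * u) γ = sRefl ν (u γ) := rfl
      rw [h1, huγ, sRefl_self ν (hΦ.ne_zero ν (hpos.subset hνp))]
      exact neg_not_pos hΦ hpos ν hνp
    have hinvu : ∀ β ∈ Φp, u β ∉ Φp → ⟪β, μ⟫ = 0 := by
      intro β hβ hub
      apply hinv β hβ
      rw [hw]
      have h1 : (sRefl ν * u) β = sRefl ν (u β) := rfl
      rw [h1]
      have huβΦ : u β ∈ Φ := (weyl_maps_root hΦ hpos u humem).1 β (hpos.subset hβ)
      have hnuβ : -(u β) ∈ Φp := pos_of_not_pos hΦ hpos _ huβΦ hub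
      have hne : -(u β) ≠ ν := by
        intro h
        have huβν : u β = -ν := by
          rw [← h, neg_neg]
        have hβγ : β = -γ := by
          calc β = u⁻¹ (u β) := (inv_apply_apply u β).symm
            _ = u⁻¹ (-ν) := by rw [huβν]
            _ = -(u⁻¹ ν) := by simp
            _ = -γ := rfl
        rw [hβγ] at hβ
        exact neg_not_pos hΦ hpos γ hγp hβ
      have hsp : sRefl ν (-(u β)) ∈ Φp := simple_perm hΦ hpos ν (-(u β)) hνs hnuβ hne
      intro hcon
      have hmn : sRefl ν (-(u β)) = -(sRefl ν (u β)) := by simp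
      rw [hmn] at hsp
      exact neg_not_pos hΦ hpos _ hcon hsp
    have hIH := IH m.length (by omega) m rfl hmls hinvu
    rw [hw]
    have h1 : (sRefl ν * u) μ = sRefl ν (u μ) := rfl
    rw [h1, hIH]
    apply sRefl_orth
    calc ⟪ν, μ⟫ = ⟪u γ, u μ⟫ := by rw [huγ, hIH]
      _ = ⟪γ, μ⟫ := u.inner_map_map γ μ
      _ = 0 := hγμ
  · obtain ⟨l₂, hl₂s, hl₂len, hl₂eq⟩ := drop_lemma hΦ hpos m hmls ν hνp hγp
    have hwrew : (((ν::m).map sRefl).prod : V ≃ₗᵢ[ℝ] V) = ((l₂.map sRefl).prod : V ≃ₗᵢ[ℝ] V) := by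
      rw [hw, ← hl₂eq]
    rw [hwrew]
    apply IH l₂.length (by omega) l₂ rfl hl₂s
    intro β hβ hcon
    apply hinv β hβ
    rw [hwrew]
    exact hcon

theorem wx_fix (μ : V) (hdom : ∀ β ∈ Φp, 0 ≤ ⟪β, μ⟫) (r : V ≃ₗᵢ[ℝ] V)
    (hr : r ∈ weylGroup Φ) (hinv : ∀ β ∈ Φp, r β ∉ Φp → ⟪β, μ⟫ = 0) : r μ = μ := by
  obtain ⟨l, hls, hleq⟩ := exists_word hΦ hpos r (W0_le_WD hΦ hpos hr)
  rw [hleq]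
  apply main_fix hΦ hpos μ hdom l.length l rfl hls
  intro β hβ hcon
  apply hinv β hβ
  rw [hleq]
  exact hcon

end RS3

/-- for `x = v t^μ` with `μ` dominant (so `w_x = id`), one has
`Φ_x = {α ∈ Φ⁺ : ⟨α,μ⟩ = 0 and vα ∈ Φ⁺}`, and every `r ∈ W_x` fixes `μ`. -/
theorem stmt16 (Φ Φp : Set V) (hΦ : IsRootSystem Φ) (hpos : IsPositiveSystem Φ Φp)
    (μ : V) (hdom : ∀ β ∈ Φp, 0 ≤ ⟪β, μ⟫)
    (v : V ≃ₗᵢ[ℝ] V) (hv : v ∈ weylGroup Φ)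
    (Φx : Set V)
    (hΦx : Φx = {γ ∈ Φp | ⟪γ, μ⟫ + (if γ ∈ Φp then (0 : ℝ) else -1)
      - (if v γ ∈ Φp then (0 : ℝ) else -1) = 0}) :
    Φx = {γ ∈ Φp | ⟪γ, μ⟫ = 0 ∧ v γ ∈ Φp} ∧ ∀ r ∈ Wx Φ Φp Φx, r μ = μ := by
  have hset : Φx = {γ ∈ Φp | ⟪γ, μ⟫ = 0 ∧ v γ ∈ Φp} := by
    rw [hΦx]
    ext γ
    simp only [Set.mem_setOf_eq]
    constructor
    · rintro ⟨hγp, heq⟩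
      rw [if_pos hγp] at heq
      by_cases hvγ : v γ ∈ Φp
      · rw [if_pos hvγ] at heq
        exact ⟨hγp, by linarith, hvγ⟩
      · rw [if_neg hvγ] at heq
        have := hdom γ hγp
        exact absurd heq (by linarith)
    · rintro ⟨hγp, hμ0, hvγ⟩
      rw [if_pos hγp, if_pos hvγ]
      exact ⟨hγp, by linarith⟩
  refine ⟨hset, ?_⟩
  rintro r ⟨hrW, hrmap⟩
  apply wx_fix hΦ hpos μ hdom r hrW
  intro β hβ hrβ
  have hβx : β ∈ Φx := by
    by_contra hnx
    exact hrβ (hrmap β ⟨hβ, hnx⟩)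
  rw [hset] at hβx
  exact hβx.2.1
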